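/- Let ξ > 0, C > 0, δ > 0, and let c : ℤ → ℂ satisfy c_{−k} = conj(c_k) and |c_k| ≤ C·e^{−δ·|k|} for all k ∈ ℤ. For x ≥ 0 set ρ̃(x) = Σ_{k∈ℤ} c_k·ρ_{−ξ,k}(x). If ρ̃(x) is a positive real number for every x > 0, then Σ_{k∈ℤ} c_k/(ξ − i·k) is a real number and is ≤ 0. -/

import Mathlib

/-!
Put `a = ξ - ik`, so `Re a = ξ > 0`, and `T = √x`. Then
`π x ρ_{-ξ,k}(x) + 1/a = 2 (T² (1 - 2aT e^{-aT²} ∫₀^T e^{au²} du) + 1/(2a))`.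
Comparing `e^{au²}` with the derivative of `e^{au²} (1/(2au) + 1/(4a²u³))` shows that the right
side is `O(|a|/x)`, with a constant depending only on `ξ`. Since `c_k` decays exponentially,
dominated convergence gives `π x ρ̃(x) → -Σ c_k/(ξ - ik)` as `x → ∞`. For `x > 0` the left side
is a positive real number, so the limit is a nonnegative real number.
-/

/-- `ρ_{ξ,k}(x) = (2/π)(2 w e^{wx} √x ∫₀^{√x} e^{-w u²} du + 1)` with `w = ξ + i k`. -/
noncomputable def rho (ξ : ℝ) (k : ℤ) (x : ℝ) : ℂ :=
  (2 / (Real.pi : ℂ)) *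
    (2 * ((ξ : ℂ) + (k : ℂ) * Complex.I) *
        Complex.exp (((ξ : ℂ) + (k : ℂ) * Complex.I) * (x : ℂ)) * (Real.sqrt x : ℂ) *
        (∫ u in (0:ℝ)..Real.sqrt x,
          Complex.exp (-(((ξ : ℂ) + (k : ℂ) * Complex.I)) * (u : ℂ) ^ 2)) + 1)

open Filter Topology MeasureTheory intervalIntegral Complex Real
open scoped ComplexOrder

lemma norm_cexp_mul_sq (a : ℂ) (u : ℝ) : ‖cexp (a * u ^ 2)‖ = rexp (a.re * u ^ 2) := by
  rw [Complex.norm_exp, ← ofReal_pow, re_mul_ofReal]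

/-- Two terms of the asymptotic expansion of `∫^u e^{a t²} dt` as `u → ∞`. -/
noncomputable def approxPrimitive (a : ℂ) (u : ℝ) : ℂ :=
  cexp (a * u ^ 2) * ((2 * a * u)⁻¹ + (4 * a ^ 2 * u ^ 3)⁻¹)

lemma hasDerivAt_approxPrimitive {a : ℂ} (ha : a ≠ 0) {u : ℝ} (hu : u ≠ 0) :
    HasDerivAt (approxPrimitive a) (cexp (a * u ^ 2) * (1 - 3 / (4 * a ^ 2 * u ^ 4))) u := by
  have hu' : (u : ℂ) ≠ 0 := ofReal_ne_zero.mpr hu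
  have hid : HasDerivAt (fun z : ℂ => z) 1 u := hasDerivAt_id _
  have hexp := ((hid.pow 2).const_mul a).cexp
  have hinv₁ := (hid.const_mul (2 * a)).inv (by simp [ha, hu'])
  have hinv₂ := ((hid.pow 3).const_mul (4 * a ^ 2)).inv (by simp [ha, hu'])
  refine (hexp.mul (hinv₁.add hinv₂)).comp_ofReal.congr_deriv ?_
  simp only [Pi.add_apply, Pi.inv_apply, Pi.pow_apply]
  field_simp
  ring

lemma integral_exp_mul_sq_div_pow_four_le {ξ b T : ℝ} (hξ : 0 < ξ) (hb : 0 < b)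
    (hb5 : 5 / ξ ≤ b ^ 2) (hbT : b ≤ T) :
    ∫ u in b..T, rexp (ξ * u ^ 2) / u ^ 4 ≤ rexp (ξ * T ^ 2) / (ξ * T ^ 5) := by
  have hpos : ∀ u ∈ Set.Icc b T, 0 < u := fun u hu => hb.trans_le hu.1
  have hderiv : ∀ u ∈ Set.Ioo b T, HasDerivWithinAt (fun u => rexp (ξ * u ^ 2) / (ξ * u ^ 5))
      (rexp (ξ * u ^ 2) * (2 / u ^ 4 - 5 / (ξ * u ^ 6))) (Set.Ioi u) u := fun u hu => by
    have hu0 : u ≠ 0 := (hpos u (Set.Ioo_subset_Icc_self hu)).ne'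
    refine HasDerivAt.hasDerivWithinAt ?_
    refine (((hasDerivAt_pow 2 u).const_mul ξ).exp.fun_div ((hasDerivAt_pow 5 u).const_mul ξ)
      (mul_ne_zero hξ.ne' (pow_ne_zero 5 hu0))).congr_deriv ?_
    field_simp
    ring
  have hle : ∀ u ∈ Set.Ioo b T,
      rexp (ξ * u ^ 2) / u ^ 4 ≤ rexp (ξ * u ^ 2) * (2 / u ^ 4 - 5 / (ξ * u ^ 6)) := fun u hu => by
    have hu0 := hpos u (Set.Ioo_subset_Icc_self hu)
    have h5 : 0 ≤ ξ * u ^ 2 - 5 := by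
      rw [div_le_iff₀ hξ] at hb5
      nlinarith [hu.1]
    have hdiff : rexp (ξ * u ^ 2) * (2 / u ^ 4 - 5 / (ξ * u ^ 6)) - rexp (ξ * u ^ 2) / u ^ 4
        = rexp (ξ * u ^ 2) * (ξ * u ^ 2 - 5) / (ξ * u ^ 6) := by
      field_simp
      ring
    have : 0 ≤ rexp (ξ * u ^ 2) * (ξ * u ^ 2 - 5) / (ξ * u ^ 6) := by positivity
    linarith
  have hcont : ContinuousOn (fun u => rexp (ξ * u ^ 2) / u ^ 4) (Set.Icc b T) :=
    ContinuousOn.div (by fun_prop) (by fun_prop) fun u hu => (pow_pos (hpos u hu) 4).ne'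
  have hcont' : ContinuousOn (fun u => rexp (ξ * u ^ 2) / (ξ * u ^ 5)) (Set.Icc b T) :=
    ContinuousOn.div (by fun_prop) (by fun_prop) fun u hu =>
      (mul_pos hξ (pow_pos (hpos u hu) 5)).ne'
  have hb' : 0 ≤ rexp (ξ * b ^ 2) / (ξ * b ^ 5) := by positivity
  linarith [integral_le_sub_of_hasDeriv_right_of_le hbT hcont' hderiv hcont.integrableOn_Icc hle]

lemma norm_integral_exp_mul_sq_div_pow_four_le {a : ℂ} {b T : ℝ} (ha : 0 < a.re) (hb : 0 < b)
    (hb5 : 5 / a.re ≤ b ^ 2) (hbT : b ≤ T) :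
    ‖∫ u in b..T, cexp (a * u ^ 2) * (3 / (4 * a ^ 2 * u ^ 4))‖
      ≤ 3 / (4 * ‖a‖ ^ 2) * (rexp (a.re * T ^ 2) / (a.re * T ^ 5)) := by
  have hnorm : ∀ u : ℝ, ‖cexp (a * u ^ 2) * (3 / (4 * a ^ 2 * u ^ 4))‖
      = 3 / (4 * ‖a‖ ^ 2) * (rexp (a.re * u ^ 2) / u ^ 4) := by
    intro u
    rw [norm_mul, norm_cexp_mul_sq, norm_div, norm_mul, norm_mul, norm_pow, norm_pow,
      Complex.norm_real, Real.norm_eq_abs, Even.pow_abs (by decide)]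
    norm_num
    ring
  calc _ ≤ ∫ u in b..T, ‖cexp (a * u ^ 2) * (3 / (4 * a ^ 2 * u ^ 4))‖ :=
        norm_integral_le_integral_norm hbT
    _ = 3 / (4 * ‖a‖ ^ 2) * ∫ u in b..T, rexp (a.re * u ^ 2) / u ^ 4 := by
        simp_rw [hnorm, intervalIntegral.integral_const_mul]
    _ ≤ _ := by
        gcongr
        exact integral_exp_mul_sq_div_pow_four_le ha hb hb5 hbT

lemma norm_integral_sub_approxPrimitive_le {a : ℂ} {b : ℝ} (ha : 0 < a.re) (hb : 0 < b) :
    ‖(∫ u in (0 : ℝ)..b, cexp (a * u ^ 2)) - approxPrimitive a b‖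
      ≤ rexp (a.re * b ^ 2) * (b + (2 * a.re * b)⁻¹ + (4 * a.re ^ 2 * b ^ 3)⁻¹) := by
  have hre : a.re ≤ ‖a‖ := re_le_norm a
  have hint : ‖∫ u in (0 : ℝ)..b, cexp (a * u ^ 2)‖ ≤ rexp (a.re * b ^ 2) * b := by
    have := norm_integral_le_of_norm_le_const (a := 0) (b := b) (C := rexp (a.re * b ^ 2))
      (f := fun u : ℝ => cexp (a * u ^ 2)) fun u hu => by
        rw [Set.uIoc_of_le hb.le] at hu
        rw [norm_cexp_mul_sq]
        gcongr
        exacts [hu.1.le, hu.2]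
    simpa [abs_of_pos hb] using this
  have hprim : ‖approxPrimitive a b‖
      ≤ rexp (a.re * b ^ 2) * ((2 * a.re * b)⁻¹ + (4 * a.re ^ 2 * b ^ 3)⁻¹) := by
    rw [approxPrimitive, norm_mul, norm_cexp_mul_sq]
    gcongr
    refine (norm_add_le _ _).trans (add_le_add ?_ ?_)
    all_goals
      rw [norm_inv]
      gcongr
      simp [abs_of_pos hb]
      gcongr
  calc _ ≤ ‖∫ u in (0 : ℝ)..b, cexp (a * u ^ 2)‖ + ‖approxPrimitive a b‖ := norm_sub_le _ _
    _ ≤ _ := add_le_add hint hprim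
    _ = _ := by ring

noncomputable def gaussRemainder (a : ℂ) (T : ℝ) : ℂ :=
  T ^ 2 * (1 - 2 * a * T * cexp (-(a * T ^ 2)) * ∫ u in (0 : ℝ)..T, cexp (a * u ^ 2)) + 1 / (2 * a)

lemma gaussRemainder_eq {a : ℂ} (ha : a ≠ 0) {b T : ℝ} (hb : 0 < b) (hbT : b ≤ T) :
    gaussRemainder a T = -(2 * a * T ^ 3 * cexp (-(a * T ^ 2)) *
          ((∫ u in (0 : ℝ)..b, cexp (a * u ^ 2)) - approxPrimitive a b
            + ∫ u in b..T, cexp (a * u ^ 2) * (3 / (4 * a ^ 2 * u ^ 4)))) := by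
  have hne : ∀ u ∈ Set.uIcc b T, u ≠ 0 := fun u hu =>
    (hb.trans_le (Set.uIcc_of_le hbT ▸ hu).1).ne'
  have hcont : Continuous fun u : ℝ => cexp (a * u ^ 2) := by fun_prop
  have hcorr : ContinuousOn (fun u : ℝ => 3 / (4 * a ^ 2 * (u : ℂ) ^ 4)) (Set.uIcc b T) :=
    continuousOn_const.div (by fun_prop) fun u hu => by simp [ha, hne u hu]
  have hmain : IntervalIntegrable
      (fun u : ℝ => cexp (a * u ^ 2) * (1 - 3 / (4 * a ^ 2 * u ^ 4))) volume b T :=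
    (hcont.continuousOn.mul (continuousOn_const.sub hcorr)).intervalIntegrable
  have hcorrection : IntervalIntegrable
      (fun u : ℝ => cexp (a * u ^ 2) * (3 / (4 * a ^ 2 * u ^ 4))) volume b T :=
    (hcont.continuousOn.mul hcorr).intervalIntegrable
  have hFTC : ∫ u in b..T, cexp (a * u ^ 2) * (1 - 3 / (4 * a ^ 2 * u ^ 4))
      = approxPrimitive a T - approxPrimitive a b :=
    integral_eq_sub_of_hasDerivAt (fun u hu => hasDerivAt_approxPrimitive ha (hne u hu)) hmain
  have htail : ∫ u in b..T, cexp (a * u ^ 2) = approxPrimitive a T - approxPrimitive a b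
      + ∫ u in b..T, cexp (a * u ^ 2) * (3 / (4 * a ^ 2 * u ^ 4)) := by
    rw [← hFTC, ← integral_add hmain hcorrection]
    simp_rw [mul_sub, mul_one, sub_add_cancel]
  have hT : (T : ℂ) ≠ 0 := ofReal_ne_zero.mpr (hb.trans_le hbT).ne'
  rw [gaussRemainder,
    ← integral_add_adjacent_intervals (hcont.intervalIntegrable 0 b) (hcont.intervalIntegrable b T),
    htail, approxPrimitive, Complex.exp_neg]
  generalize (∫ u in (0 : ℝ)..b, cexp (a * u ^ 2)) = I
  generalize (∫ u in b..T, cexp (a * u ^ 2) * (3 / (4 * a ^ 2 * u ^ 4))) = J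
  field_simp
  ring

lemma pow_three_mul_exp_neg_le {ξ T : ℝ} (hξ : 0 < ξ) (hT : 0 < T) :
    T ^ 3 * rexp (-(ξ * T ^ 2)) ≤ 6 / (ξ ^ 3 * T ^ 3) := by
  have h := Real.pow_div_factorial_le_exp (ξ * T ^ 2) (by positivity) 3
  rw [Real.exp_neg, ← div_eq_mul_inv, div_le_div_iff₀ (exp_pos _) (by positivity)]
  norm_num [Nat.factorial] at h
  linarith

lemma exists_norm_gaussRemainder_le {ξ : ℝ} (hξ : 0 < ξ) :
    ∃ b D : ℝ, 1 ≤ b ∧ 0 ≤ D ∧ ∀ a : ℂ, a.re = ξ → ∀ T : ℝ, b ≤ T →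
      ‖gaussRemainder a T‖ ≤ D * ‖a‖ / T ^ 2 := by
  set b := 1 + 5 / ξ
  set K := rexp (ξ * b ^ 2) * (b + (2 * ξ * b)⁻¹ + (4 * ξ ^ 2 * b ^ 3)⁻¹)
  have hb1 : 1 ≤ b := le_add_of_nonneg_right (by positivity)
  have hb0 : 0 < b := zero_lt_one.trans_le hb1
  have hb5 : 5 / ξ ≤ b ^ 2 := by nlinarith
  refine ⟨b, 12 * K / ξ ^ 3 + 3 / (2 * ξ ^ 3), hb1, by positivity, fun a ha T hbT => ?_⟩
  have hT1 : 1 ≤ T := hb1.trans hbT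
  have hT0 : 0 < T := zero_lt_one.trans_le hT1
  have hξa : ξ ≤ ‖a‖ := ha ▸ re_le_norm a
  have ha0 : a ≠ 0 := norm_pos_iff.mp (hξ.trans_le hξa)
  have hK := norm_integral_sub_approxPrimitive_le (ha ▸ hξ) hb0
  have hJ := norm_integral_exp_mul_sq_div_pow_four_le (ha ▸ hξ) hb0 (ha ▸ hb5) hbT
  rw [ha] at hK hJ
  have hnorm : ‖2 * a * T ^ 3 * cexp (-(a * T ^ 2))‖ = 2 * ‖a‖ * (T ^ 3 * rexp (-(ξ * T ^ 2))) := by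
    rw [← neg_mul, norm_mul, norm_cexp_mul_sq, neg_re, ha]
    simp [abs_of_pos hT0]
    ring
  rw [gaussRemainder_eq ha0 hb0 hbT, norm_neg, norm_mul, hnorm]
  calc _ ≤ 2 * ‖a‖ * (T ^ 3 * rexp (-(ξ * T ^ 2)))
        * (K + 3 / (4 * ‖a‖ ^ 2) * (rexp (ξ * T ^ 2) / (ξ * T ^ 5))) := by
        gcongr
        exact (norm_add_le _ _).trans (add_le_add hK hJ)
    _ = 2 * ‖a‖ * K * (T ^ 3 * rexp (-(ξ * T ^ 2))) + 3 / (2 * ‖a‖ * ξ * T ^ 2) := by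
        rw [Real.exp_neg]
        field_simp
        ring
    _ ≤ 2 * ‖a‖ * K * (6 / (ξ ^ 3 * T ^ 3)) + 3 / (2 * ‖a‖ * ξ * T ^ 2) := by
        gcongr
        exact pow_three_mul_exp_neg_le hξ hT0
    _ ≤ 2 * ‖a‖ * K * (6 / (ξ ^ 3 * T ^ 2)) + 3 * ‖a‖ / (2 * ξ ^ 3 * T ^ 2) := by
        gcongr ?_ + ?_
        · gcongr
          norm_num
        · rw [div_le_div_iff₀ (by positivity) (by positivity)]
          have : ξ ^ 2 ≤ ‖a‖ ^ 2 := by gcongr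
          nlinarith [mul_le_mul_of_nonneg_right this (by positivity : 0 ≤ 6 * ξ * T ^ 2)]
    _ = _ := by ring

lemma exists_norm_pi_mul_rho_add_inv_le {ξ : ℝ} (hξ : 0 < ξ) :
    ∃ b D : ℝ, 0 < b ∧ 0 ≤ D ∧ ∀ (k : ℤ) (x : ℝ), b ≤ x →
      ‖π * x * rho (-ξ) k x + ((ξ : ℂ) - k * I)⁻¹‖ ≤ D * ‖(ξ : ℂ) - k * I‖ / x := by
  obtain ⟨b, D, hb1, hD, hrem⟩ := exists_norm_gaussRemainder_le hξ
  have hb0 : 0 < b := zero_lt_one.trans_le hb1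
  refine ⟨b ^ 2, 2 * D, by positivity, by positivity, fun k x hx => ?_⟩
  set a : ℂ := ξ - k * I
  have hre : a.re = ξ := by simp [a]
  have ha0 : a ≠ 0 := fun h => hξ.ne' (by simpa [h] using hre.symm)
  have hx0 : 0 < x := (pow_pos hb0 2).trans_le hx
  set T := √x
  have hT : b ≤ T := Real.le_sqrt_of_sq_le hx
  have hxT : (x : ℂ) = (T : ℂ) ^ 2 := by rw [← ofReal_pow, Real.sq_sqrt hx0.le]
  have hw : ((-ξ : ℝ) : ℂ) + k * I = -a := by push_cast; ring
  have hπ : (π : ℂ) ≠ 0 := ofReal_ne_zero.mpr pi_ne_zero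
  have key : π * x * rho (-ξ) k x + a⁻¹ = 2 * gaussRemainder a T := by
    simp only [rho, gaussRemainder, hw, neg_neg, neg_mul]
    rw [hxT]
    field_simp
    ring
  rw [key, norm_mul, Complex.norm_two]
  calc _ ≤ 2 * (D * ‖a‖ / T ^ 2) := by gcongr; exact hrem a hre T hT
    _ = _ := by rw [Real.sq_sqrt hx0.le]; ring

lemma summable_norm_mul_abs_pow_of_norm_le_exp {E : Type*} [SeminormedAddCommGroup E] {c : ℤ → E}
    {C δ : ℝ} (hδ : 0 < δ) (hdecay : ∀ k : ℤ, ‖c k‖ ≤ C * rexp (-δ * |(k : ℝ)|)) (m : ℕ) :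
    Summable fun k : ℤ => ‖c k‖ * |(k : ℝ)| ^ m := by
  have hnat := Real.summable_pow_mul_exp_neg_nat_mul m hδ
  have hexp : Summable fun k : ℤ => C * (|(k : ℝ)| ^ m * rexp (-δ * |(k : ℝ)|)) :=
    (Summable.of_nat_of_neg (by simpa using hnat) (by simpa using hnat)).mul_left C
  refine hexp.of_nonneg_of_le (fun k => by positivity) fun k => ?_
  calc ‖c k‖ * |(k : ℝ)| ^ m ≤ C * rexp (-δ * |(k : ℝ)|) * |(k : ℝ)| ^ m := by
        gcongr
        exact hdecay k
    _ = _ := by ring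

lemma tendsto_pi_mul_mul_tsum_rho {ξ C δ : ℝ} (hξ : 0 < ξ) (hδ : 0 < δ) {c : ℤ → ℂ}
    (hdecay : ∀ k : ℤ, ‖c k‖ ≤ C * rexp (-δ * |(k : ℝ)|)) :
    Tendsto (fun x : ℝ => π * x * ∑' k : ℤ, c k * rho (-ξ) k x) atTop
      (𝓝 (-∑' k : ℤ, c k / ((ξ : ℂ) - k * I))) := by
  obtain ⟨b, D, hb, hD, hρ⟩ := exists_norm_pi_mul_rho_add_inv_le hξ
  have hnorm_le : ∀ k : ℤ, ‖(ξ : ℂ) - k * I‖ ≤ ξ + |(k : ℝ)| := fun k =>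
    (norm_sub_le _ _).trans_eq (by simp [abs_of_pos hξ])
  have hinv_le : ∀ k : ℤ, ‖((ξ : ℂ) - k * I)⁻¹‖ ≤ ξ⁻¹ := fun k => by
    rw [norm_inv]
    exact inv_anti₀ hξ (by simpa using re_le_norm ((ξ : ℂ) - k * I))
  have hlim : ∀ k : ℤ, Tendsto (fun x : ℝ => c k * (π * x * rho (-ξ) k x)) atTop
      (𝓝 (-(c k / ((ξ : ℂ) - k * I)))) := by
    intro k
    have : Tendsto (fun x : ℝ => π * x * rho (-ξ) k x) atTop (𝓝 (-((ξ : ℂ) - k * I)⁻¹)) := by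
      rw [tendsto_iff_norm_sub_tendsto_zero]
      refine squeeze_zero' (Eventually.of_forall fun _ => norm_nonneg _) ?_
        ((tendsto_const_nhds (x := D * ‖(ξ : ℂ) - k * I‖)).div_atTop tendsto_id)
      filter_upwards [eventually_ge_atTop b] with x hx
      simpa using hρ k x hx
    simpa [div_eq_mul_inv] using this.const_mul (c k)
  have hbound : ∀ᶠ x in atTop, ∀ k : ℤ,
      ‖c k * (π * x * rho (-ξ) k x)‖ ≤ ‖c k‖ * (ξ⁻¹ + D * (ξ + |(k : ℝ)|) / b) := by
    filter_upwards [eventually_ge_atTop b] with x hx k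
    rw [norm_mul]
    gcongr
    calc ‖π * x * rho (-ξ) k x‖
        = ‖(π * x * rho (-ξ) k x + ((ξ : ℂ) - k * I)⁻¹) - ((ξ : ℂ) - k * I)⁻¹‖ := by
          rw [add_sub_cancel_right]
      _ ≤ D * ‖(ξ : ℂ) - k * I‖ / x + ξ⁻¹ :=
          (norm_sub_le _ _).trans (add_le_add (hρ k x hx) (hinv_le k))
      _ ≤ ξ⁻¹ + D * (ξ + |(k : ℝ)|) / b := by
          rw [add_comm]
          gcongr
          exact hnorm_le k
  have hsum : Summable fun k : ℤ => ‖c k‖ * (ξ⁻¹ + D * (ξ + |(k : ℝ)|) / b) := by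
    have h0 := summable_norm_mul_abs_pow_of_norm_le_exp hδ hdecay 0
    have h1 := summable_norm_mul_abs_pow_of_norm_le_exp hδ hdecay 1
    refine ((h0.mul_left (ξ⁻¹ + D * ξ / b)).add (h1.mul_left (D / b))).congr fun k => ?_
    simp only [pow_zero, pow_one]
    ring
  rw [← tsum_neg]
  refine (tendsto_tsum_of_dominated_convergence hsum hlim hbound).congr fun x => ?_
  rw [← tsum_mul_left]
  congr 1
  ext k
  ring

theorem stmt17_general (ξ : ℝ) (hξ : 0 < ξ) (C δ : ℝ) (hδ : 0 < δ)
    (c : ℤ → ℂ)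
    (hdecay : ∀ k : ℤ, ‖c k‖ ≤ C * Real.exp (-δ * |(k : ℝ)|))
    (hpos : ∀ x : ℝ, 0 < x →
      (∑' k : ℤ, c k * rho (-ξ) k x).im = 0 ∧ 0 < (∑' k : ℤ, c k * rho (-ξ) k x).re) :
    (∑' k : ℤ, c k / ((ξ : ℂ) - (k : ℂ) * Complex.I)).im = 0 ∧
    (∑' k : ℤ, c k / ((ξ : ℂ) - (k : ℂ) * Complex.I)).re ≤ 0 := by
  have hnonneg : 0 ≤ -∑' k : ℤ, c k / ((ξ : ℂ) - k * I) := by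
    refine ge_of_tendsto (tendsto_pi_mul_mul_tsum_rho hξ hδ hdecay) ?_
    filter_upwards [eventually_gt_atTop 0] with x hx
    have hρ : 0 < ∑' k : ℤ, c k * rho (-ξ) k x :=
      Complex.pos_iff.mpr ⟨(hpos x hx).2, (hpos x hx).1.symm⟩
    have hπx : (0 : ℂ) < π * x := by exact_mod_cast mul_pos pi_pos hx
    exact (mul_pos hπx hρ).le
  obtain ⟨hre, him⟩ := Complex.le_def.mp (neg_nonneg.mp hnonneg)
  exact ⟨him, hre⟩

/-- if `ρ̃(x) = Σ c_k ρ_{-ξ,k}(x)` is a positive real for all `x > 0`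
(`ξ > 0`), then `Σ c_k/(ξ - ik)` is a real number `≤ 0`. -/
theorem stmt17 (ξ : ℝ) (hξ : 0 < ξ) (C δ : ℝ) (hC : 0 < C) (hδ : 0 < δ)
    (c : ℤ → ℂ) (hconj : ∀ k : ℤ, c (-k) = starRingEnd ℂ (c k))
    (hdecay : ∀ k : ℤ, ‖c k‖ ≤ C * Real.exp (-δ * |(k : ℝ)|))
    (hpos : ∀ x : ℝ, 0 < x →
      (∑' k : ℤ, c k * rho (-ξ) k x).im = 0 ∧ 0 < (∑' k : ℤ, c k * rho (-ξ) k x).re) :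
    (∑' k : ℤ, c k / ((ξ : ℂ) - (k : ℂ) * Complex.I)).im = 0 ∧
    (∑' k : ℤ, c k / ((ξ : ℂ) - (k : ℂ) * Complex.I)).re ≤ 0 :=
  stmt17_general ξ hξ C δ hδ c hdecay hpos
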